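/- Let N and M be modules over R^s. Under the isomorphism N ⊗_{R^s} R ⊗_{R^s} M ≅ (N ⊗_{R^s} M) ⊕ (N ⊗_{R^s} M) induced by the R^s-basis {1, ρ} of the middle factor (n ⊗ r ⊗ m ↦ (∂_s(−r·(s·ρ))·n ⊗ m, ∂_s(r)·n ⊗ m)), the endomorphism n ⊗ r ⊗ m ↦ n ⊗ ρr ⊗ m corresponds to the matrix of R^s-linear maps [[0, μ(−ρ·(s·ρ))], [id, μ(ρ + s·ρ)]], where for c ∈ R^s the map μ(c) : N ⊗_{R^s} M → N ⊗_{R^s} M is n ⊗ m ↦ c·n ⊗ m. -/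

import Mathlib

/-!
Writing `α = α_s`, the polynomials `r` and `s r` agree modulo `α`, so `r - s r = α v`; since `s`
is an involution with `s α = -α` (forced by `s ρ = ρ - α`), the quotient `v` is invariant, and
then so is `u = r - v ρ`. Hence `R = Rˢ ⊕ Rˢ ρ`, and comparing `α r` with `α (u + v ρ)` identifies
the coordinates as `u = ∂ₛ(-r·(s ρ))`, `v = ∂ₛ(r)`. Multiplication by `ρ` acts on coordinates
through `ρ² = (ρ + s ρ) ρ - ρ (s ρ)`, with both coefficients invariant. Tensoring the coordinate
isomorphism `R ≅ Rˢ × Rˢ` with `N` and `M` gives the isomorphism of the statement.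
-/

open MvPolynomial TensorProduct

/-- The linear form `v ↦ ∑ i, g i * v i` on `V = Fin n → ℝ`. -/
noncomputable def linForm (n : ℕ) (g : Fin n → ℝ) : MvPolynomial (Fin n) ℝ :=
  ∑ i, MvPolynomial.C (g i) * MvPolynomial.X i

/-- The algebra automorphism of `R = ℝ[X₁,…,Xₙ]` (polynomial functions on `V = Fin n → ℝ`)
given by `(s·f)(v) = f (s v)` for the reflection `s(v) = v - ⟨α_s, v⟩ α_s^∨`, where the
linear form `α_s` has coefficient vector `a` and the vector `α_s^∨` has coordinates `c`. -/
noncomputable def reflAct (n : ℕ) (a c : Fin n → ℝ) :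
    MvPolynomial (Fin n) ℝ →ₐ[ℝ] MvPolynomial (Fin n) ℝ :=
  MvPolynomial.aeval fun j => MvPolynomial.X j - MvPolynomial.C (c j) * linForm n a

/-- The subalgebra `Rˢ ⊆ R` of `s`-invariant polynomials. -/
noncomputable def invariants (n : ℕ) (a c : Fin n → ℝ) :
    Subalgebra ℝ (MvPolynomial (Fin n) ℝ) :=
  AlgHom.equalizer (reflAct n a c) (AlgHom.id ℝ (MvPolynomial (Fin n) ℝ))

section TensorMiddle

variable {B P N M : Type*} [CommSemiring B] [AddCommMonoid P] [Module B P]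
  [AddCommMonoid N] [Module B N] [AddCommMonoid M] [Module B M]

noncomputable def tensorMiddleEquivProd (f : P ≃ₗ[B] B × B) :
    N ⊗[B] (P ⊗[B] M) ≃ₗ[B] (N ⊗[B] M) × (N ⊗[B] M) :=
  (f.rTensor M ≪≫ₗ prodLeft B B B B M ≪≫ₗ (TensorProduct.lid B M).prodCongr
    (TensorProduct.lid B M)).lTensor N ≪≫ₗ prodRight B B N M M

theorem tensorMiddleEquivProd_tmul (f : P ≃ₗ[B] B × B) (x : N) (p : P) (m : M) :
    tensorMiddleEquivProd f (x ⊗ₜ (p ⊗ₜ m)) = ((f p).1 • x ⊗ₜ m, (f p).2 • x ⊗ₜ m) := by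
  simp only [tensorMiddleEquivProd, LinearEquiv.trans_apply, LinearEquiv.lTensor_tmul,
    LinearEquiv.rTensor_tmul]
  obtain ⟨u, v⟩ := f p
  simp [tmul_smul, smul_tmul']

end TensorMiddle

section InvolutionFixedPoints

variable {K R : Type*} [CommRing K] [CommRing R] [Algebra K R] {σ : R →ₐ[K] R} {α ρ : R}

theorem map_eq_neg_of_map_eq_sub (hσ : Function.Involutive σ) (hρ : σ ρ = ρ - α) :
    σ α = -α := by
  have h := hσ ρ
  rw [hρ, map_sub, hρ] at h
  linear_combination -h

theorem map_eq_self_of_sub_map_eq_mul (hσ : Function.Involutive σ) (hα : IsLeftRegular α)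
    (hρ : σ ρ = ρ - α) {f v : R} (hv : f - σ f = α * v) : σ v = v := by
  have h := congrArg σ hv
  rw [map_sub, hσ f, map_mul, map_eq_neg_of_map_eq_sub hσ hρ] at h
  exact hα (by linear_combination h + hv)

variable (σ ρ) in
noncomputable def addMulLinearMap :
    (σ.equalizer (AlgHom.id K R) × σ.equalizer (AlgHom.id K R))
      →ₗ[σ.equalizer (AlgHom.id K R)] R :=
  (Algebra.linearMap _ R).coprod (LinearMap.toSpanSingleton _ R ρ)

theorem addMulLinearMap_apply (p : σ.equalizer (AlgHom.id K R) × σ.equalizer (AlgHom.id K R)) :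
    addMulLinearMap σ ρ p = p.1 + p.2 * ρ := rfl

theorem map_coe_equalizer_id (u : σ.equalizer (AlgHom.id K R)) : σ u = u := u.2

theorem addMulLinearMap_injective (hα : IsLeftRegular α) (hρ : σ ρ = ρ - α) :
    Function.Injective (addMulLinearMap σ ρ) := by
  refine (injective_iff_map_eq_zero _).mpr fun ⟨u, v⟩ h ↦ ?_
  rw [addMulLinearMap_apply] at h
  have hσh := congrArg σ h
  rw [map_zero, map_add, map_mul, hρ, map_coe_equalizer_id, map_coe_equalizer_id] at hσh
  have hv : (v : R) = 0 := hα (by linear_combination h - hσh)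
  have hu : (u : R) = 0 := by simpa [hv] using h
  exact Prod.ext (Subtype.ext hu) (Subtype.ext hv)

theorem addMulLinearMap_surjective (hσ : Function.Involutive σ) (hα : IsLeftRegular α)
    (hdvd : ∀ f, α ∣ f - σ f) (hρ : σ ρ = ρ - α) :
    Function.Surjective (addMulLinearMap σ ρ) := by
  intro f
  obtain ⟨v, hfv⟩ := hdvd f
  have hv : σ v = v := map_eq_self_of_sub_map_eq_mul hσ hα hρ hfv
  have hu : σ (f - v * ρ) = f - v * ρ := by
    rw [map_sub, map_mul, hv, hρ]
    linear_combination -hfv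
  exact ⟨(⟨f - v * ρ, hu⟩, ⟨v, hv⟩), by rw [addMulLinearMap_apply]; ring⟩

variable (σ ρ) in
noncomputable def fixedPointsCoordEquiv (hσ : Function.Involutive σ) (hα : IsLeftRegular α)
    (hdvd : ∀ f, α ∣ f - σ f) (hρ : σ ρ = ρ - α) :
    R ≃ₗ[σ.equalizer (AlgHom.id K R)]
      σ.equalizer (AlgHom.id K R) × σ.equalizer (AlgHom.id K R) :=
  (LinearEquiv.ofBijective (addMulLinearMap σ ρ)
    ⟨addMulLinearMap_injective hα hρ, addMulLinearMap_surjective hσ hα hdvd hρ⟩).symm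

variable (hσ : Function.Involutive σ) (hα : IsLeftRegular α) (hdvd : ∀ f, α ∣ f - σ f)
  (hρ : σ ρ = ρ - α)

theorem fixedPointsCoordEquiv_eq_iff {r : R}
    {p : σ.equalizer (AlgHom.id K R) × σ.equalizer (AlgHom.id K R)} :
    fixedPointsCoordEquiv σ ρ hσ hα hdvd hρ r = p ↔ r = p.1 + p.2 * ρ := by
  rw [fixedPointsCoordEquiv, LinearEquiv.symm_apply_eq]
  rfl

theorem fixedPointsCoordEquiv_add_mul (r : R) :
    ((fixedPointsCoordEquiv σ ρ hσ hα hdvd hρ r).1 : R) +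
      (fixedPointsCoordEquiv σ ρ hσ hα hdvd hρ r).2 * ρ = r :=
  (fixedPointsCoordEquiv_eq_iff hσ hα hdvd hρ).mp rfl |>.symm

theorem fixedPointsCoordEquiv_eq_of_mul_eq {r : R} (d₁ d₂ : σ.equalizer (AlgHom.id K R))
    (h₁ : α * d₁ = -(r * σ ρ) - σ (-(r * σ ρ))) (h₂ : α * d₂ = r - σ r) :
    fixedPointsCoordEquiv σ ρ hσ hα hdvd hρ r = (d₁, d₂) := by
  rw [fixedPointsCoordEquiv_eq_iff]
  rw [map_neg, map_mul, hσ ρ, hρ] at h₁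
  exact hα (by linear_combination -h₁ - ρ * h₂)

theorem fixedPointsCoordEquiv_mul_left (r : R) (c₁ c₂ : σ.equalizer (AlgHom.id K R))
    (h₁ : (c₁ : R) = -(ρ * σ ρ)) (h₂ : (c₂ : R) = ρ + σ ρ) :
    fixedPointsCoordEquiv σ ρ hσ hα hdvd hρ (ρ * r) =
      (c₁ * (fixedPointsCoordEquiv σ ρ hσ hα hdvd hρ r).2,
        (fixedPointsCoordEquiv σ ρ hσ hα hdvd hρ r).1 +
          c₂ * (fixedPointsCoordEquiv σ ρ hσ hα hdvd hρ r).2) := by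
  rw [fixedPointsCoordEquiv_eq_iff]
  have hr := fixedPointsCoordEquiv_add_mul hσ hα hdvd hρ r
  push_cast
  rw [h₁, h₂]
  linear_combination (-ρ) * hr

end InvolutionFixedPoints

section Reflection

variable {n : ℕ}

theorem eval_linForm (g v : Fin n → ℝ) : eval v (linForm n g) = ∑ i, g i * v i := by
  simp [linForm]

theorem linForm_ne_zero {g v : Fin n → ℝ} (h : ∑ i, g i * v i ≠ 0) : linForm n g ≠ 0 :=
  fun hg ↦ h (by rw [← eval_linForm, hg, map_zero])

variable (a c : Fin n → ℝ)

theorem reflAct_X (j : Fin n) : reflAct n a c (X j) = X j - C (c j) * linForm n a :=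
  aeval_X _ j

theorem reflAct_C (x : ℝ) : reflAct n a c (C x) = C x :=
  aeval_C _ x

theorem reflAct_linForm (g : Fin n → ℝ) :
    reflAct n a c (linForm n g) = linForm n g - C (∑ i, g i * c i) * linForm n a := by
  simp only [linForm, map_sum, map_mul, reflAct_C, reflAct_X, Finset.sum_mul,
    ← Finset.sum_sub_distrib]
  exact Finset.sum_congr rfl fun i _ ↦ by ring

theorem reflAct_involutive (hac : ∑ i, a i * c i = 2) : Function.Involutive (reflAct n a c) := by
  have hα : reflAct n a c (linForm n a) = -linForm n a := by
    rw [reflAct_linForm, hac, map_ofNat]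
    ring
  suffices (reflAct n a c).comp (reflAct n a c) = AlgHom.id ℝ _ from AlgHom.congr_fun this
  refine algHom_ext fun j ↦ ?_
  rw [AlgHom.comp_apply, reflAct_X, map_sub, map_mul, reflAct_X, reflAct_C, hα,
    AlgHom.id_apply]
  ring

theorem linForm_dvd_sub_reflAct (f : MvPolynomial (Fin n) ℝ) :
    linForm n a ∣ f - reflAct n a c f := by
  let π := Ideal.Quotient.mkₐ ℝ (Ideal.span {linForm n a})
  have hπ : π.comp (reflAct n a c) = π := algHom_ext fun j ↦ by
    simp [π, reflAct_X, Ideal.Quotient.mk_singleton_self]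
  rw [← Ideal.mem_span_singleton, ← Ideal.Quotient.eq]
  exact (AlgHom.congr_fun hπ f).symm

end Reflection

/-- The Demazure values `∂ₛ(-r·(s·ρ))` and `∂ₛ(r)` enter as the invariants `d₁`, `d₂` with
`αₛ·d₁ = (-r·(s·ρ)) - s·(-r·(s·ρ))` and `αₛ·d₂ = r - s·r`. -/
theorem middle_multiplication_matrix (n : ℕ) (a c rv : Fin n → ℝ)
    (hac : ∑ i, a i * c i = 2) (hrc : ∑ i, rv i * c i = 1)
    (N : Type) [AddCommGroup N] [Module (invariants n a c) N]
    (M : Type) [AddCommGroup M] [Module (invariants n a c) M] :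
    ∃ e : (N ⊗[invariants n a c] (MvPolynomial (Fin n) ℝ ⊗[invariants n a c] M))
          ≃ₗ[invariants n a c]
          ((N ⊗[invariants n a c] M) × (N ⊗[invariants n a c] M)),
      (∀ (x : N) (r : MvPolynomial (Fin n) ℝ) (m : M) (d₁ d₂ : invariants n a c),
        linForm n a * (d₁ : MvPolynomial (Fin n) ℝ) =
          (-(r * reflAct n a c (linForm n rv))) -
            reflAct n a c (-(r * reflAct n a c (linForm n rv))) →
        linForm n a * (d₂ : MvPolynomial (Fin n) ℝ) = r - reflAct n a c r →
        e (x ⊗ₜ[invariants n a c] (r ⊗ₜ[invariants n a c] m)) =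
          ((d₁ • x) ⊗ₜ[invariants n a c] m, (d₂ • x) ⊗ₜ[invariants n a c] m)) ∧
      (∀ (x : N) (r : MvPolynomial (Fin n) ℝ) (m : M) (c₁ c₂ : invariants n a c),
        (c₁ : MvPolynomial (Fin n) ℝ) =
          -(linForm n rv * reflAct n a c (linForm n rv)) →
        (c₂ : MvPolynomial (Fin n) ℝ) =
          linForm n rv + reflAct n a c (linForm n rv) →
        e (x ⊗ₜ[invariants n a c] ((linForm n rv * r) ⊗ₜ[invariants n a c] m)) =
          (c₁ • (e (x ⊗ₜ[invariants n a c] (r ⊗ₜ[invariants n a c] m))).2,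
            (e (x ⊗ₜ[invariants n a c] (r ⊗ₜ[invariants n a c] m))).1 +
              c₂ • (e (x ⊗ₜ[invariants n a c] (r ⊗ₜ[invariants n a c] m))).2)) := by
  have hσ := reflAct_involutive a c hac
  have hα : IsLeftRegular (linForm n a) :=
    IsLeftCancelMulZero.mul_left_cancel_of_ne_zero (linForm_ne_zero (v := c) (by simp [hac]))
  have hρ : reflAct n a c (linForm n rv) = linForm n rv - linForm n a := by
    rw [reflAct_linForm, hrc, map_one, one_mul]
  let coord : MvPolynomial (Fin n) ℝ ≃ₗ[invariants n a c] invariants n a c × invariants n a c :=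
    fixedPointsCoordEquiv _ _ hσ hα (linForm_dvd_sub_reflAct a c) hρ
  -- The ascription moves `e` onto the statement's instance path (`Subalgebra.toSemiring`
  -- rather than `CommSemiring.toSemiring`), so that `rw [he]` matches below.
  let e : N ⊗[invariants n a c] (MvPolynomial (Fin n) ℝ ⊗[invariants n a c] M)
      ≃ₗ[invariants n a c] (N ⊗[invariants n a c] M) × (N ⊗[invariants n a c] M) :=
    tensorMiddleEquivProd coord
  have he (x : N) (p : MvPolynomial (Fin n) ℝ) (m : M) :
      e (x ⊗ₜ (p ⊗ₜ m)) = ((coord p).1 • x ⊗ₜ m, (coord p).2 • x ⊗ₜ m) :=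
    tensorMiddleEquivProd_tmul coord x p m
  refine ⟨e, fun x r m d₁ d₂ h₁ h₂ ↦ ?_, fun x r m c₁ c₂ h₁ h₂ ↦ ?_⟩
  · have hr : coord r = (d₁, d₂) := fixedPointsCoordEquiv_eq_of_mul_eq _ _ _ _ d₁ d₂ h₁ h₂
    rw [he, hr]
    rfl
  · have hρr : coord (linForm n rv * r) = (c₁ * (coord r).2, (coord r).1 + c₂ * (coord r).2) :=
      fixedPointsCoordEquiv_mul_left _ _ _ _ r c₁ c₂ h₁ h₂
    rw [he, he, hρr]
    simp only [smul_tmul', mul_smul, add_smul]
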